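/- For every n ≥ 1 and every ζ on the unit circle, the following identity holds: ζⁿ·ρ_n·conj(φ_{n+1}(ζ))·φ*_n(ζ) − ζ^{n−1}·ρ_{n−1}·conj(φ_n(ζ))·φ*_{n−1}(ζ) = −(ζⁿ·α_n + ζ^{n−1}·α_{n−1})·|φ_n(ζ)|². -/

import Mathlib

open Filter Finset

/-- The orthonormal Szegő polynomials `(φ_n(ζ), φ*_n(ζ))` defined by the Szegő recursion. -/
noncomputable def szegoPhi (α : ℕ → ℂ) (ζ : ℂ) : ℕ → ℂ × ℂ
  | 0 => (1, 1)
  | n + 1 =>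
      (((Real.sqrt (1 - ‖α n‖ ^ 2) : ℝ) : ℂ))⁻¹ •
        (ζ * (szegoPhi α ζ n).1 - (starRingEnd ℂ) (α n) * (szegoPhi α ζ n).2,
         (szegoPhi α ζ n).2 - α n * ζ * (szegoPhi α ζ n).1)

/-- The CD kernel diagonal `K_n(ζ,ζ) = Σ_{j=0}^n |φ_j(ζ)|²`. -/
noncomputable def szegoK (α : ℕ → ℂ) (ζ : ℂ) (n : ℕ) : ℝ :=
  ∑ j ∈ Finset.range (n + 1), ‖(szegoPhi α ζ j).1‖ ^ 2

/-- The perturbation `Δ_n(ζ) = ρ_n conj(φ_{n+1}(ζ)) φ*_n(ζ) / ((1-γ)γ⁻¹ + K_n(ζ,ζ))` of the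
`n`-th Verblunsky coefficient upon insertion of a pure point of weight `γ` at `ζ`. -/
noncomputable def szegoDelta (α : ℕ → ℂ) (ζ : ℂ) (γ : ℝ) (n : ℕ) : ℂ :=
  ((Real.sqrt (1 - ‖α n‖ ^ 2) : ℝ) : ℂ) *
    (starRingEnd ℂ) ((szegoPhi α ζ (n + 1)).1) * (szegoPhi α ζ n).2 /
    ((((1 - γ) * γ⁻¹ + szegoK α ζ n : ℝ)) : ℂ)

/-! On the unit circle `φ*ₖ = ζᵏ conj φₖ`, so the first term equals `ζⁿ conj φ_{n+1} · ρ_{n+1} φ*_{n+2}`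
and the second `ζⁿ conj φ_{n+1} · ρₙ φ*ₙ`. The Szegő recursion writes `ρ_{n+1} φ*_{n+2}` as
`φ*_{n+1} − α_{n+1} ζ φ_{n+1}` and its inverse writes `ρₙ φ*ₙ` as `φ*_{n+1} + αₙ φ_{n+1}`; the
`φ*_{n+1}` parts cancel and what remains is `−(ζⁿ⁺¹ α_{n+1} + ζⁿ αₙ) |φ_{n+1}|²`. -/

open ComplexConjugate

lemma ofReal_sqrt_one_sub_norm_sq_ne_zero {z : ℂ} (hz : ‖z‖ < 1) :
    ((Real.sqrt (1 - ‖z‖ ^ 2) : ℝ) : ℂ) ≠ 0 := by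
  have : 0 < 1 - ‖z‖ ^ 2 := by nlinarith [norm_nonneg z]
  exact_mod_cast (Real.sqrt_pos.2 this).ne'

lemma ofReal_sqrt_one_sub_norm_sq_sq {z : ℂ} (hz : ‖z‖ ≤ 1) :
    ((Real.sqrt (1 - ‖z‖ ^ 2) : ℝ) : ℂ) ^ 2 = 1 - z * conj z := by
  have : 0 ≤ 1 - ‖z‖ ^ 2 := by nlinarith [norm_nonneg z]
  rw [Complex.mul_conj', ← Complex.ofReal_pow, Real.sq_sqrt this]
  push_cast
  ring

section Recursion

variable {α : ℕ → ℂ} (ζ : ℂ) {k : ℕ}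

lemma szegoPhi_succ_fst (hk : ‖α k‖ < 1) :
    ((Real.sqrt (1 - ‖α k‖ ^ 2) : ℝ) : ℂ) * (szegoPhi α ζ (k + 1)).1 =
      ζ * (szegoPhi α ζ k).1 - conj (α k) * (szegoPhi α ζ k).2 := by
  rw [szegoPhi, Prod.smul_fst, smul_eq_mul,
    mul_inv_cancel_left₀ (ofReal_sqrt_one_sub_norm_sq_ne_zero hk)]

lemma szegoPhi_succ_snd (hk : ‖α k‖ < 1) :
    ((Real.sqrt (1 - ‖α k‖ ^ 2) : ℝ) : ℂ) * (szegoPhi α ζ (k + 1)).2 =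
      (szegoPhi α ζ k).2 - α k * ζ * (szegoPhi α ζ k).1 := by
  rw [szegoPhi, Prod.smul_snd, smul_eq_mul,
    mul_inv_cancel_left₀ (ofReal_sqrt_one_sub_norm_sq_ne_zero hk)]

lemma szegoPhi_snd_of_succ (hk : ‖α k‖ < 1) :
    ((Real.sqrt (1 - ‖α k‖ ^ 2) : ℝ) : ℂ) * (szegoPhi α ζ k).2 =
      (szegoPhi α ζ (k + 1)).2 + α k * (szegoPhi α ζ (k + 1)).1 := by
  apply mul_left_cancel₀ (ofReal_sqrt_one_sub_norm_sq_ne_zero hk)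
  linear_combination (szegoPhi α ζ k).2 * ofReal_sqrt_one_sub_norm_sq_sq hk.le -
    szegoPhi_succ_snd ζ hk - α k * szegoPhi_succ_fst ζ hk

end Recursion

lemma szegoPhi_snd_eq_pow_mul_conj (α : ℕ → ℂ) {ζ : ℂ} (hζ : ‖ζ‖ = 1) (k : ℕ) :
    (szegoPhi α ζ k).2 = ζ ^ k * conj (szegoPhi α ζ k).1 := by
  have hζ₀ : ζ ≠ 0 := norm_ne_zero_iff.1 (hζ ▸ one_ne_zero)
  induction k with
  | zero => simp [szegoPhi]
  | succ k ih =>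
    -- the factor `ρₖ⁻¹` is real, so it commutes with `conj`
    simp only [szegoPhi, Prod.smul_fst, Prod.smul_snd, smul_eq_mul, map_mul, map_sub, map_inv₀,
      Complex.conj_ofReal, Complex.conj_conj, ih, map_pow, ← Complex.inv_eq_conj hζ, inv_pow]
    field_simp
    ring

/-- The key algebraic identity in the proof of Theorem 3: for `n ≥ 1` (written `n + 1`) and
`ζ` on the unit circle,
`ζⁿ ρₙ conj(φ_{n+1}) φ*ₙ − ζ^{n-1} ρ_{n-1} conj(φₙ) φ*_{n-1} = −(ζⁿ αₙ + ζ^{n-1} α_{n-1}) |φₙ|²`. -/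
theorem rotated_numerator_difference
    (α : ℕ → ℂ) (hα : ∀ n, ‖α n‖ < 1)
    (ζ : ℂ) (hζ : ‖ζ‖ = 1) (n : ℕ) :
    ζ ^ (n + 1) * ((Real.sqrt (1 - ‖α (n + 1)‖ ^ 2) : ℝ) : ℂ) *
        (starRingEnd ℂ) ((szegoPhi α ζ (n + 2)).1) * (szegoPhi α ζ (n + 1)).2 -
      ζ ^ n * ((Real.sqrt (1 - ‖α n‖ ^ 2) : ℝ) : ℂ) *
        (starRingEnd ℂ) ((szegoPhi α ζ (n + 1)).1) * (szegoPhi α ζ n).2 =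
    -(ζ ^ (n + 1) * α (n + 1) + ζ ^ n * α n) *
      ((‖(szegoPhi α ζ (n + 1)).1‖ : ℝ) : ℂ) ^ 2 := by
  have hφ₁ := szegoPhi_snd_eq_pow_mul_conj α hζ (n + 1)
  have hφ₂ := szegoPhi_snd_eq_pow_mul_conj α hζ (n + 2)
  have hforward := szegoPhi_succ_snd ζ (hα (n + 1))
  have hbackward := szegoPhi_snd_of_succ ζ (hα n)
  rw [← Complex.mul_conj']
  linear_combination ζ ^ (n + 1) * ((Real.sqrt (1 - ‖α (n + 1)‖ ^ 2) : ℝ) : ℂ) *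
      conj (szegoPhi α ζ (n + 2)).1 * hφ₁ -
    ζ ^ n * ((Real.sqrt (1 - ‖α (n + 1)‖ ^ 2) : ℝ) : ℂ) * conj (szegoPhi α ζ (n + 1)).1 * hφ₂ +
    ζ ^ n * conj (szegoPhi α ζ (n + 1)).1 * (hforward - hbackward)
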